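/- In the graph Γ on vertex set Z_n where i and j are joined when rectangles R_i and R_j touch on their left or right sides, each connected component (warp thread) is a cycle with exactly n/gcd(n,s) vertices, and the vertices of a component are precisely the elements of a single congruence class modulo gcd(n,s). -/

import Mathlib

/-- The circular (Lee) distance between two elements of `ZMod n`. -/
def circDist (n : ℕ) (i j : ZMod n) : ℕ := min (i - j).val (j - i).val

/-- A permutation of `ZMod n` is `(s,k)`-clash-free if it moves every pair of
distinct elements at distance less than `s` to a pair at distance at least `k`. -/
def ClashFree (n s k : ℕ) (π : Equiv.Perm (ZMod n)) : Prop :=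
  ∀ i j : ZMod n, i ≠ j → circDist n i j < s → k ≤ circDist n (π i) (π j)

/-- The graph `Γ` joining `i` and `j` when rectangles `R_i` and `R_j`
touch on their left or right sides: `j` is horizontally `s` away from `i`
and the vertical projections (heights `k`) overlap. -/
def warpGraph (n s k : ℕ) (π : Equiv.Perm (ZMod n)) : SimpleGraph (ZMod n) :=
  SimpleGraph.fromRel (fun i j => (j - i).val = s ∧ circDist n (π i) (π j) < k)

/-!
By the clash-free condition, `π i, π (i + 1), …, π (i + s)` are pairwise at circular distance
at least `k`, except possibly for the two ends; if the ends were also `k` apart, `s + 1` arcs of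
length `k` would be disjoint in `ZMod n`, impossible since `n = s k + r < (s + 1) k`. Hence `i` and
`i + s` always touch, `Γ` is the Cayley graph of `ZMod n` with generator `s`, and its components
are the cosets of the subgroup generated by `s`, which is the subgroup generated by `gcd n s`
and has order `n / gcd n s`.
-/

theorem ZMod.natCast_ne_natCast_of_lt {n a b : ℕ} (hab : a < b) (hb : b < n) :
    (a : ZMod n) ≠ b := by
  rw [Ne, ZMod.natCast_eq_natCast_iff', Nat.mod_eq_of_lt (hab.trans hb), Nat.mod_eq_of_lt hb]
  exact hab.ne

theorem ZMod.zmultiples_natCast_eq_zmultiples_gcd (n s : ℕ) :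
    AddSubgroup.zmultiples (s : ZMod n) = AddSubgroup.zmultiples ((n.gcd s : ℕ) : ZMod n) := by
  apply le_antisymm <;> rw [AddSubgroup.zmultiples_le, AddSubgroup.mem_zmultiples_iff]
  · obtain ⟨t, ht⟩ := Nat.gcd_dvd_right n s
    exact ⟨t, by rw [zsmul_eq_mul]; nth_rw 2 [ht]; push_cast; ring⟩
  · refine ⟨n.gcdB s, ?_⟩
    have hbez : ((n.gcd s : ℤ) : ZMod n) = ((n * n.gcdA s + s * n.gcdB s : ℤ) : ZMod n) :=
      congrArg _ (Nat.gcd_eq_gcd_ab n s)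
    push_cast [ZMod.natCast_self] at hbez
    rw [zsmul_eq_mul, hbez]
    ring

theorem ZMod.mem_zmultiples_natCast_iff {n : ℕ} [NeZero n] (g : ℕ) (x : ZMod n) :
    x ∈ AddSubgroup.zmultiples (g : ZMod n) ↔ ∃ t : ℕ, x = ((t * g : ℕ) : ZMod n) := by
  simp [← mem_multiples_iff_mem_zmultiples, AddSubmonoid.mem_multiples_iff, eq_comm]

namespace SimpleGraph

variable {A : Type*} [AddCommGroup A] {G : SimpleGraph A} {a : A}

theorem reachable_iff_sub_mem_zmultiples (hG : ∀ x y, G.Adj x y ↔ y = x + a ∨ x = y + a)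
    {x y : A} : G.Reachable x y ↔ y - x ∈ AddSubgroup.zmultiples a := by
  constructor
  · rw [reachable_iff_reflTransGen]
    intro h
    induction h with
    | refl => simp
    | tail _ hadj ih =>
      rw [← sub_add_sub_cancel]
      refine add_mem ?_ ih
      rcases (hG _ _).1 hadj with rfl | rfl <;> simp
  · rw [AddSubgroup.mem_zmultiples_iff]
    rintro ⟨m, hm⟩
    obtain rfl := eq_add_of_sub_eq' hm.symm
    clear hm
    induction m using Int.induction_on with
    | zero => simp
    | succ m ih =>
      exact ih.trans ((hG _ _).2 (.inl (by rw [add_smul, one_smul, add_assoc]))).reachable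
    | pred m ih =>
      exact ih.trans ((hG _ _).2
        (.inr (by rw [sub_smul, one_smul, add_sub_assoc', sub_add_cancel]))).reachable

theorem ncard_setOf_reachable (hG : ∀ x y, G.Adj x y ↔ y = x + a ∨ x = y + a) (x : A) :
    {y | G.Reachable x y}.ncard = addOrderOf a := by
  have hcomp : {y | G.Reachable x y} = (x + ·) '' AddSubgroup.zmultiples a := by
    ext y
    rw [Set.mem_ofPred_eq, reachable_iff_sub_mem_zmultiples hG]
    exact ⟨fun h => ⟨y - x, h, add_sub_cancel x y⟩, by rintro ⟨z, hz, rfl⟩; simpa using hz⟩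
  rw [hcomp, Set.ncard_image_of_injective _ (add_right_injective x), ← Nat.card_coe_set_eq]
  exact Nat.card_zmultiples a

theorem ncard_neighborSet_eq_two (hG : ∀ x y, G.Adj x y ↔ y = x + a ∨ x = y + a)
    (ha : a + a ≠ 0) (x : A) : (G.neighborSet x).ncard = 2 := by
  have hnbr : G.neighborSet x = {x + a, x - a} := by
    ext y
    simp [hG, eq_sub_iff_add_eq, eq_comm]
  rw [hnbr, Set.ncard_pair]
  intro h
  exact ha (eq_neg_iff_add_eq_zero.1 (add_left_cancel (h.trans (sub_eq_add_neg x a))))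

end SimpleGraph

theorem circDist_comm (n : ℕ) (i j : ZMod n) : circDist n i j = circDist n j i :=
  min_comm _ _

theorem circDist_add_natCast_le (n : ℕ) (i : ZMod n) (m : ℕ) : circDist n i (i + m) ≤ m :=
  calc circDist n i (i + m) ≤ (i + m - i).val := min_le_right _ _
    _ = m % n := by rw [add_sub_cancel_left, ZMod.val_natCast]
    _ ≤ m := Nat.mod_le m n

theorem card_mul_le_of_le_circDist {ι : Type*} {n k : ℕ} [NeZero n] (hkn : k ≤ n)
    (S : Finset ι) (f : ι → ZMod n)
    (hf : ∀ a ∈ S, ∀ b ∈ S, a ≠ b → k ≤ circDist n (f a) (f b)) : S.card * k ≤ n := by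
  have arc_inj : Set.InjOn (fun p : ι × ℕ => f p.1 + p.2) ↑(S ×ˢ Finset.range k) := by
    suffices h : ∀ a ∈ S, ∀ b ∈ S, ∀ t < k, ∀ u ≤ t, f a + t = f b + u → a = b ∧ t = u by
      rintro ⟨a, t⟩ hat ⟨b, u⟩ hbu heq
      simp only [Finset.coe_product, Finset.coe_range, Set.mem_prod, Finset.mem_coe,
        Set.mem_Iio] at hat hbu
      rcases le_total u t with hut | htu
      · obtain ⟨rfl, rfl⟩ := h a hat.1 b hbu.1 t hat.2 u hut heq
        rfl
      · obtain ⟨rfl, rfl⟩ := h b hbu.1 a hat.1 u hbu.2 t htu heq.symm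
        rfl
    intro a ha b hb t ht u hut heq
    have hfb : f b = f a + ((t - u : ℕ) : ZMod n) := by
      rw [Nat.cast_sub hut]; linear_combination -heq
    have hab : a = b := by
      by_contra hab
      have := (hf a ha b hb hab).trans (hfb ▸ circDist_add_natCast_le n (f a) (t - u))
      omega
    subst hab
    refine ⟨rfl, ?_⟩
    have htu : (t : ZMod n) = u := add_left_cancel heq
    rwa [ZMod.natCast_eq_natCast_iff', Nat.mod_eq_of_lt (by omega),
      Nat.mod_eq_of_lt (by omega)] at htu
  calc S.card * k = ((S ×ˢ Finset.range k).image fun p => f p.1 + p.2).card := by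
        rw [Finset.card_image_of_injOn arc_inj, Finset.card_product, Finset.card_range]
    _ ≤ n := (Finset.card_le_univ _).trans (ZMod.card n).le

theorem ClashFree.circDist_apply_add_lt {n s k : ℕ} {π : Equiv.Perm (ZMod n)}
    (hcf : ClashFree n s k π) (hsn : s < n) (hkn : k ≤ n) (hn : n < (s + 1) * k)
    (i : ZMod n) : circDist n (π i) (π (i + s)) < k := by
  have : NeZero n := ⟨by omega⟩
  by_contra! hfar
  have hpair : ∀ j l : ℕ, j < l → l ≤ s → k ≤ circDist n (π (i + j)) (π (i + l)) := by
    intro j l hjl hls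
    by_cases hends : j = 0 ∧ l = s
    · obtain ⟨rfl, rfl⟩ := hends
      simpa using hfar
    · refine hcf _ _ (by simpa using ZMod.natCast_ne_natCast_of_lt hjl (by omega)) ?_
      have := circDist_add_natCast_le n (i + j) (l - j)
      rw [add_assoc, ← Nat.cast_add, Nat.add_sub_cancel' hjl.le] at this
      omega
  have := card_mul_le_of_le_circDist hkn (Finset.range (s + 1)) (fun j => π (i + j)) <| by
    intro j hj l hl hjl
    simp only [Finset.mem_range] at hj hl
    rcases hjl.lt_or_gt with h | h
    · exact hpair j l h (by omega)
    · rw [circDist_comm]; exact hpair l j h (by omega)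
  rw [Finset.card_range] at this
  omega

theorem warpGraph_adj_iff {n s k : ℕ} {π : Equiv.Perm (ZMod n)} (hs : 0 < s) (hsn : s < n)
    (htouch : ∀ i, circDist n (π i) (π (i + s)) < k) (i j : ZMod n) :
    (warpGraph n s k π).Adj i j ↔ j = i + s ∨ i = j + s := by
  have : NeZero n := ⟨by omega⟩
  have hrel : ∀ i j : ZMod n, (j - i).val = s ∧ circDist n (π i) (π j) < k ↔ j = i + s := by
    intro i j
    constructor
    · rintro ⟨hval, -⟩
      rw [← hval, ZMod.natCast_zmod_val, add_sub_cancel]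
    · rintro rfl
      exact ⟨by rw [add_sub_cancel_left, ZMod.val_natCast_of_lt hsn], htouch i⟩
  rw [warpGraph, SimpleGraph.fromRel_adj, hrel, hrel, and_iff_right_iff_imp]
  have hs0 : (s : ZMod n) ≠ 0 := by
    simpa using (ZMod.natCast_ne_natCast_of_lt hs hsn).symm
  rintro (rfl | rfl) h
  · exact hs0 (by linear_combination -h)
  · exact hs0 (by linear_combination h)

theorem stmt_6_general (n s k r : ℕ)
    (hn : n = s * k + r) (hr1 : 1 ≤ r) (hrs : r < s) (hrk : r < k)
    (π : Equiv.Perm (ZMod n)) (hcf : ClashFree n s k π) :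
    ∀ i : ZMod n,
      ((warpGraph n s k π).neighborSet i).ncard = 2 ∧
      {j : ZMod n | (warpGraph n s k π).Reachable i j}
        = {j : ZMod n | ∃ t : ℕ, j = i + ((t * Nat.gcd n s : ℕ) : ZMod n)} ∧
      {j : ZMod n | (warpGraph n s k π).Reachable i j}.ncard = n / Nat.gcd n s := by
  have : NeZero n := ⟨by omega⟩
  have h2sn : 2 * s < n := by nlinarith
  have hadj := warpGraph_adj_iff (by omega) (by omega)
    (hcf.circDist_apply_add_lt (by omega) (by nlinarith) (by nlinarith))
  intro i
  refine ⟨SimpleGraph.ncard_neighborSet_eq_two hadj ?_ i, ?_, ?_⟩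
  · simpa [two_mul] using (ZMod.natCast_ne_natCast_of_lt (a := 0) (by omega) h2sn).symm
  · ext j
    rw [Set.mem_ofPred_eq, Set.mem_ofPred_eq, SimpleGraph.reachable_iff_sub_mem_zmultiples hadj,
      ZMod.zmultiples_natCast_eq_zmultiples_gcd, ZMod.mem_zmultiples_natCast_iff]
    simp [sub_eq_iff_eq_add']
  · rw [SimpleGraph.ncard_setOf_reachable hadj, ZMod.addOrderOf_coe s (NeZero.ne n)]

/-- Each warp thread (connected component of `Γ`) is a cycle with exactly
`n / gcd n s` vertices: every vertex has exactly two neighbours, and the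
component of `i` is precisely the congruence class of `i` modulo `gcd n s`. -/
theorem stmt_6 (n s k r : ℕ) (hk : 0 < k) (hs : s = (n - 1) / k)
    (hn : n = s * k + r) (hr1 : 1 ≤ r) (hrs : r < s) (hrk : r < k)
    (π : Equiv.Perm (ZMod n)) (hcf : ClashFree n s k π) :
    ∀ i : ZMod n,
      ((warpGraph n s k π).neighborSet i).ncard = 2 ∧
      {j : ZMod n | (warpGraph n s k π).Reachable i j}
        = {j : ZMod n | ∃ t : ℕ, j = i + ((t * Nat.gcd n s : ℕ) : ZMod n)} ∧
      {j : ZMod n | (warpGraph n s k π).Reachable i j}.ncard = n / Nat.gcd n s :=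
  stmt_6_general n s k r hn hr1 hrs hrk π hcf
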